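/- arXiv:2509.06587 — 5 statements merged into one kernel-verified Lean document; each statement's English description precedes it below -/
import Mathlib

section
/- Let G and H be groups such that G is virtually algebraically fibred. If there exists a surjective homomorphism φ : H → G with finitely generated kernel, then H is virtually algebraically fibred. -/
/-- A group is algebraically fibred if there is a surjection onto ℤ with
finitely generated kernel. -/
def AlgFibered (G : Type*) [Group G] : Prop :=
  ∃ ψ : G →* Multiplicative ℤ, Function.Surjective ψ ∧ (MonoidHom.ker ψ).FG

/-- A group is virtually algebraically fibred if some finite-index subgroup
is algebraically fibred. -/
def VirtAlgFibered (G : Type*) [Group G] : Prop :=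
  ∃ H : Subgroup G, H.FiniteIndex ∧ AlgFibered H

/-- An extension of a finitely generated group by a finitely generated kernel
is finitely generated. -/
lemma group_fg_of_surjective_of_fg_ker {A B : Type*} [Group A] [Group B] (f : A →* B)
    (hsurj : Function.Surjective f) (hB : Group.FG B) (hker : f.ker.FG) : Group.FG A := by
  classical
  obtain ⟨S, hS⟩ := hker
  obtain ⟨T, hT⟩ := Group.fg_def.mp hB
  choose lift hlift using hsurj
  refine Group.fg_def.mpr ⟨S ∪ T.image lift, ?_⟩
  set C : Subgroup A := Subgroup.closure ((S ∪ T.image lift : Finset A) : Set A) with hC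
  rw [eq_top_iff]
  intro a _
  have hmap : Subgroup.closure ((T : Finset B) : Set B) ≤ C.map f := by
    rw [hC, MonoidHom.map_closure]
    apply Subgroup.closure_mono
    intro b hb
    refine ⟨lift b, ?_, hlift b⟩
    simp only [Finset.coe_union, Set.mem_union, Finset.coe_image, Set.mem_image]
    exact Or.inr ⟨b, hb, rfl⟩
  have hfa : f a ∈ C.map f := hmap (by rw [hT]; trivial)
  obtain ⟨c, hc, hfc⟩ := hfa
  have hkmem : a * c⁻¹ ∈ f.ker := by
    rw [MonoidHom.mem_ker, map_mul, map_inv, hfc, mul_inv_cancel]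
  have hkC : (f.ker : Subgroup A) ≤ C := by
    rw [← hS, hC]
    apply Subgroup.closure_mono
    intro x hx
    simp only [Finset.coe_union, Set.mem_union]
    exact Or.inl hx
  have : a * c⁻¹ ∈ C := hkC hkmem
  have := mul_mem this hc
  rwa [inv_mul_cancel_right] at this

theorem virtAlgFibered_of_epi (G H : Type*) [Group G] [Group H]
    (hG : VirtAlgFibered G) (φ : H →* G) (hsurj : Function.Surjective φ)
    (hker : (MonoidHom.ker φ).FG) : VirtAlgFibered H := by
  obtain ⟨K, hKfi, ψ, hψsurj, hψker⟩ := hG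
  refine ⟨K.comap φ, ?_, ?_⟩
  · exact ⟨by rw [Subgroup.index_comap_of_surjective _ hsurj]; exact hKfi.index_ne_zero⟩
  · -- the restricted map  φ' : φ⁻¹(K) → K
    set f : (K.comap φ) →* K := φ.subgroupComap K with hf
    have hfsurj : Function.Surjective f := by
      rintro ⟨k, hk⟩
      obtain ⟨h, hh⟩ := hsurj k
      have hmem : h ∈ K.comap φ := by simp [Subgroup.mem_comap, hh, hk]
      exact ⟨⟨h, hmem⟩, Subtype.ext hh⟩
    refine ⟨ψ.comp f, hψsurj.comp hfsurj, ?_⟩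
    -- the kernel N of ψ ∘ f
    set N : Subgroup (K.comap φ) := (ψ.comp f).ker with hN
    rw [← Group.fg_iff_subgroup_fg]
    -- the map g : N → ker ψ induced by f
    have hfmem : ∀ n : N, f n.1 ∈ ψ.ker := fun n => n.2
    set g : N →* ψ.ker := MonoidHom.codRestrict (f.comp N.subtype) ψ.ker hfmem with hg
    have hgsurj : Function.Surjective g := by
      rintro ⟨k, hk⟩
      obtain ⟨x, hx⟩ := hfsurj k
      have hxN : x ∈ N := by
        rw [hN, MonoidHom.mem_ker, MonoidHom.comp_apply, hx]; exact hk
      exact ⟨⟨x, hxN⟩, Subtype.ext hx⟩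
    have hBfg : Group.FG ψ.ker := (Group.fg_iff_subgroup_fg _).mpr hψker
    refine group_fg_of_surjective_of_fg_ker g hgsurj hBfg ?_
    -- ker g is the image of ker φ
    rw [← Group.fg_iff_subgroup_fg]
    have hφfg : Group.FG φ.ker := (Group.fg_iff_subgroup_fg _).mpr hker
    -- build a surjection from ker φ onto ker g
    have hstep1 : ∀ x : φ.ker, (x : H) ∈ K.comap φ := by
      intro x
      have : φ x = 1 := x.2
      simp only [Subgroup.mem_comap, this]
      exact one_mem K
    have hstep2 : ∀ x : φ.ker, (⟨(x : H), hstep1 x⟩ : K.comap φ) ∈ N := by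
      intro x
      have hx1 : φ x = 1 := x.2
      rw [hN, MonoidHom.mem_ker, MonoidHom.comp_apply]
      have : f (⟨(x : H), hstep1 x⟩ : K.comap φ) = 1 := Subtype.ext hx1
      rw [this, map_one]
    have hstep3 : ∀ x : φ.ker, (⟨⟨(x : H), hstep1 x⟩, hstep2 x⟩ : N) ∈ g.ker := by
      intro x
      have hx1 : φ x = 1 := x.2
      rw [MonoidHom.mem_ker, hg]
      exact Subtype.ext (Subtype.ext hx1)
    let e : φ.ker →* g.ker :=
      { toFun := fun x => ⟨⟨⟨(x : H), hstep1 x⟩, hstep2 x⟩, hstep3 x⟩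
        map_one' := rfl
        map_mul' := fun x y => rfl }
    have hesurj : Function.Surjective e := by
      rintro ⟨⟨⟨x, hxK⟩, hxN⟩, hxg⟩
      have hxφ : x ∈ φ.ker := by
        rw [MonoidHom.mem_ker]
        have : g (⟨⟨x, hxK⟩, hxN⟩ : N) = 1 := hxg
        have h2 : f (⟨x, hxK⟩ : K.comap φ) = 1 := congrArg Subtype.val this
        exact congrArg Subtype.val h2
      exact ⟨⟨x, hxφ⟩, rfl⟩
    exact @Group.fg_of_surjective _ _ _ _ hφfg e hesurj
end

section
/- Let Γ be a finite simplicial graph that is disconnected and has no separating intersections of links (no SILs). Then the associated right-angled Artin group A_Γ is isomorphic to a free product ℤⁿ ∗ ℤᵐ for some n, m ≥ 1; equivalently, Γ has exactly two connected components, and each of them is a complete graph. -/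
/-- The right-angled Artin group of a simplicial graph. -/
def RAAG {V : Type} (G : SimpleGraph V) : Type :=
  PresentedGroup {r : FreeGroup V | ∃ u v : V, G.Adj u v ∧
    r = FreeGroup.of u * FreeGroup.of v * (FreeGroup.of u)⁻¹ * (FreeGroup.of v)⁻¹}

instance {V : Type} (G : SimpleGraph V) : Group (RAAG G) := by
  unfold RAAG; infer_instance

/-- The vertex set of `Γ \ (lk u ∩ lk v)`. -/
def SILSet {V : Type} (G : SimpleGraph V) (u v : V) : Set V :=
  {x : V | ¬(G.Adj x u ∧ G.Adj x v)}

/-- The pair `(u, v)` forms a separating intersection of links: `u ≠ v`,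
`u` and `v` are non-adjacent, and some connected component of
`Γ \ (lk u ∩ lk v)` contains neither `u` nor `v`. -/
def FormsSIL {V : Type} (G : SimpleGraph V) (u v : V) : Prop :=
  u ≠ v ∧ ¬ G.Adj u v ∧
  ∃ w : SILSet G u v,
    (G.induce (SILSet G u v)).connectedComponentMk w ≠
      (G.induce (SILSet G u v)).connectedComponentMk
        ⟨u, fun h => G.loopless.irrefl u h.1⟩ ∧
    (G.induce (SILSet G u v)).connectedComponentMk w ≠
      (G.induce (SILSet G u v)).connectedComponentMk
        ⟨v, fun h => G.loopless.irrefl v h.2⟩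


/-! If `u` and `v` are non-adjacent and some vertex `w` is connected to neither of them, then the
component of `w` in `Γ \ (lk u ∩ lk v)` misses `u` and `v`, so `(u, v)` is a SIL. Without SILs,
two vertices in different components of `Γ` therefore reach every vertex, so there are exactly two
components; and two distinct vertices of one component are adjacent, a vertex of the other
component serving as `w`. The RAAG of a disjoint union of two cliques `A`, `B` is `ℤ^A ∗ ℤ^B`: the
universal properties of the presentation, of `ℤ^A` (for commuting images) and of the free product
give mutually inverse homomorphisms. -/

open Monoid Multiplicative SimpleGraph

namespace RAAG

variable {V : Type} {G : SimpleGraph V}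

def of (v : V) : RAAG G := PresentedGroup.of v

theorem commute_of_adj {u v : V} (h : G.Adj u v) : Commute (of (G := G) u) (of v) :=
  commutatorElement_eq_one_iff_commute.1 (PresentedGroup.one_of_mem ⟨u, v, h, rfl⟩)

theorem pairwise_commute_of_isClique {s : Set V} (hs : G.IsClique s) :
    Pairwise fun i j : s => Commute (of (G := G) i) (of j) :=
  fun i j hij => commute_of_adj (hs i.2 j.2 (Subtype.coe_ne_coe.2 hij))

variable {H : Type*} [Group H]

def lift (f : V → H) (hf : ∀ u v, G.Adj u v → Commute (f u) (f v)) : RAAG G →* H :=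
  PresentedGroup.toGroup (f := f) <| by
    rintro _ ⟨u, v, huv, rfl⟩
    simpa only [map_mul, map_inv, FreeGroup.lift_apply_of, commutatorElement_def] using
      commutatorElement_eq_one_iff_commute.2 (hf u v huv)

@[simp]
theorem lift_of (f : V → H) (hf : ∀ u v, G.Adj u v → Commute (f u) (f v)) (v : V) :
    lift f hf (of v) = f v :=
  PresentedGroup.toGroup.of (f := f) _

@[ext]
theorem hom_ext {φ ψ : RAAG G →* H} (h : ∀ v, φ (of v) = ψ (of v)) : φ = ψ :=
  PresentedGroup.ext h

end RAAG

section FreeAbelian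

variable {ι M : Type*} [Group M]

noncomputable def freeAbelianLift [Fintype ι] (g : ι → M)
    (hg : Pairwise fun i j => Commute (g i) (g j)) : (ι → Multiplicative ℤ) →* M :=
  MonoidHom.noncommPiCoprod (fun i => zpowersHom M (g i)) fun _ _ hij _ _ =>
    (hg hij).zpow_zpow _ _

@[simp]
theorem freeAbelianLift_mulSingle [Fintype ι] [DecidableEq ι] (g : ι → M)
    (hg : Pairwise fun i j => Commute (g i) (g j)) (i : ι) (x : Multiplicative ℤ) :
    freeAbelianLift g hg (Pi.mulSingle i x) = g i ^ x.toAdd :=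
  MonoidHom.noncommPiCoprod_mulSingle (ϕ := fun i => zpowersHom M (g i)) i x

theorem mulSingle_ofAdd_one_zpow [DecidableEq ι] (i : ι) (x : Multiplicative ℤ) :
    Pi.mulSingle i (ofAdd (1 : ℤ)) ^ x.toAdd = (Pi.mulSingle i x : ι → Multiplicative ℤ) := by
  rw [← Pi.mulSingle_zpow, ← ofAdd_zsmul, zsmul_one, Int.cast_id, ofAdd_toAdd]

theorem nonempty_mulEquiv_multiplicative_fin (ι : Type*) [Finite ι] :
    Nonempty ((ι → Multiplicative ℤ) ≃* Multiplicative (Fin (Nat.card ι) → ℤ)) :=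
  ⟨(MulEquiv.piMultiplicative _).symm.trans
    (LinearEquiv.funCongrLeft ℤ ℤ (Finite.equivFin ι).symm).toAddEquiv.toMultiplicative⟩

end FreeAbelian

theorem RAAG.nonempty_mulEquiv_coprod_of_isClique {V : Type} [Finite V] {G : SimpleGraph V}
    {s : Set V} (hsep : ∀ u v, G.Adj u v → (u ∈ s ↔ v ∈ s)) (hs : G.IsClique s)
    (hsc : G.IsClique sᶜ) :
    Nonempty (RAAG G ≃* Coprod (s → Multiplicative ℤ) (↥sᶜ → Multiplicative ℤ)) := by
  classical
  have := Fintype.ofFinite V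
  let fwd : RAAG G →* Coprod (s → Multiplicative ℤ) (↥sᶜ → Multiplicative ℤ) :=
    RAAG.lift (fun v => if h : v ∈ s then Coprod.inl (Pi.mulSingle ⟨v, h⟩ (ofAdd 1))
        else Coprod.inr (Pi.mulSingle ⟨v, h⟩ (ofAdd 1))) fun u v huv => by
      by_cases hu : u ∈ s
      · rw [dif_pos hu, dif_pos ((hsep u v huv).1 hu)]
        exact (Commute.all _ _).map _
      · rw [dif_neg hu, dif_neg (mt (hsep u v huv).2 hu)]
        exact (Commute.all _ _).map _
  let bwd := Coprod.lift (freeAbelianLift _ (RAAG.pairwise_commute_of_isClique hs))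
    (freeAbelianLift _ (RAAG.pairwise_commute_of_isClique hsc))
  have fwd_inl (i : s) : fwd (RAAG.of i) = Coprod.inl (Pi.mulSingle i (ofAdd 1)) := by
    simp [fwd]
  have fwd_inr (i : ↥sᶜ) : fwd (RAAG.of i) = Coprod.inr (Pi.mulSingle i (ofAdd 1)) := by
    have : (i : V) ∉ s := i.2
    simp [fwd, this]
  refine ⟨fwd.toMulEquiv bwd ?_ ?_⟩
  · ext v
    by_cases hv : v ∈ s
    · simpa [bwd] using congrArg bwd (fwd_inl ⟨v, hv⟩)
    · simpa [bwd] using congrArg bwd (fwd_inr ⟨v, hv⟩)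
  · refine Coprod.hom_ext (MonoidHom.pi_ext fun i x => ?_) (MonoidHom.pi_ext fun i x => ?_)
    · simp only [MonoidHom.comp_apply, MonoidHom.id_apply, bwd, Coprod.lift_apply_inl,
        freeAbelianLift_mulSingle, map_zpow, fwd_inl]
      rw [← map_zpow, mulSingle_ofAdd_one_zpow]
    · simp only [MonoidHom.comp_apply, MonoidHom.id_apply, bwd, Coprod.lift_apply_inr,
        freeAbelianLift_mulSingle, map_zpow, fwd_inr]
      rw [← map_zpow, mulSingle_ofAdd_one_zpow]

namespace SimpleGraph

variable {V : Type} {G : SimpleGraph V}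

theorem card_connectedComponent_eq_two {u v : V} (huv : ¬ G.Reachable u v)
    (h : ∀ w, G.Reachable w u ∨ G.Reachable w v) : Nat.card G.ConnectedComponent = 2 := by
  refine Nat.card_eq_two_iff.2 ⟨G.connectedComponentMk u, G.connectedComponentMk v,
    mt ConnectedComponent.exact huv, Set.eq_univ_of_forall fun c => ?_⟩
  induction c using ConnectedComponent.ind with
  | h w => exact (h w).imp ConnectedComponent.sound ConnectedComponent.sound

theorem compl_supp_connectedComponentMk {u v : V} (huv : ¬ G.Reachable u v)
    (h : ∀ w, G.Reachable w u ∨ G.Reachable w v) :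
    (G.connectedComponentMk u).suppᶜ = (G.connectedComponentMk v).supp := by
  ext w
  simp only [Set.mem_compl_iff, ConnectedComponent.mem_supp_iff, ConnectedComponent.eq]
  exact ⟨(h w).resolve_left, fun hwv hwu => huv (hwu.symm.trans hwv)⟩

end SimpleGraph

section NoSIL

variable {V : Type} {G : SimpleGraph V}

theorem formsSIL_of_not_reachable {u v w : V} (hne : u ≠ v) (hadj : ¬ G.Adj u v)
    (hu : ¬ G.Reachable w u) (hv : ¬ G.Reachable w v) : FormsSIL G u v := by
  have reachable_of_mk_eq {a b : SILSet G u v}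
      (h : (G.induce (SILSet G u v)).connectedComponentMk a =
        (G.induce (SILSet G u v)).connectedComponentMk b) : G.Reachable a b :=
    (ConnectedComponent.exact h).map (Embedding.induce _).toHom
  exact ⟨hne, hadj, ⟨w, fun h => hu h.1.reachable⟩, fun h => hu (reachable_of_mk_eq h),
    fun h => hv (reachable_of_mk_eq h)⟩

variable (hnosil : ∀ u v : V, ¬ FormsSIL G u v)
include hnosil

theorem reachable_or_reachable_of_forall_not_formsSIL {u v : V} (huv : ¬ G.Reachable u v)
    (w : V) : G.Reachable w u ∨ G.Reachable w v := by
  by_contra! h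
  exact hnosil u v (formsSIL_of_not_reachable (fun he => huv (he ▸ .rfl))
    (fun ha => huv ha.reachable) h.1 h.2)

theorem adj_of_reachable_of_forall_not_formsSIL (hG : ¬ G.Preconnected) {u v : V}
    (huv : G.Reachable u v) (hne : u ≠ v) : G.Adj u v := by
  by_contra hadj
  obtain ⟨a, b, hab⟩ : ∃ a b, ¬ G.Reachable a b := by simpa [Preconnected] using hG
  obtain ⟨w, hw⟩ : ∃ w, ¬ G.Reachable w u := by
    by_cases hua : G.Reachable u a
    · exact ⟨b, fun hbu => hab (hua.symm.trans hbu.symm)⟩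
    · exact ⟨a, fun hau => hua hau.symm⟩
  exact hnosil u v (formsSIL_of_not_reachable hne hadj hw fun hwv => hw (hwv.trans huv.symm))

end NoSIL

theorem raag_of_disconnected_no_sil {V : Type} [Fintype V] [Nonempty V]
    (G : SimpleGraph V) (hdisc : ¬ G.Connected)
    (hnosil : ∀ u v : V, ¬ FormsSIL G u v) :
    (∃ n m : ℕ, 1 ≤ n ∧ 1 ≤ m ∧
      Nonempty (RAAG G ≃*
        Monoid.Coprod (Multiplicative (Fin n → ℤ)) (Multiplicative (Fin m → ℤ)))) ∧
    Nat.card G.ConnectedComponent = 2 ∧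
    (∀ u v : V, G.connectedComponentMk u = G.connectedComponentMk v →
      u ≠ v → G.Adj u v) := by
  have hpre : ¬ G.Preconnected := fun h => hdisc ⟨h⟩
  obtain ⟨u, v, huv⟩ : ∃ u v, ¬ G.Reachable u v := by simpa [Preconnected] using hpre
  have hcover := reachable_or_reachable_of_forall_not_formsSIL hnosil huv
  have hadj {a b : V} : G.Reachable a b → a ≠ b → G.Adj a b :=
    adj_of_reachable_of_forall_not_formsSIL hnosil hpre
  have hclique (C : G.ConnectedComponent) : G.IsClique C.supp := fun a ha b hb hne =>
    hadj (ConnectedComponent.exact (ha.trans hb.symm)) hne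
  set s := (G.connectedComponentMk u).supp
  have hsc : sᶜ = (G.connectedComponentMk v).supp :=
    compl_supp_connectedComponentMk huv hcover
  obtain ⟨e⟩ := RAAG.nonempty_mulEquiv_coprod_of_isClique
    (fun a b hab => by simp [ConnectedComponent.connectedComponentMk_eq_of_adj hab])
    (hclique _) (hsc ▸ hclique _)
  obtain ⟨es⟩ := nonempty_mulEquiv_multiplicative_fin s
  obtain ⟨esc⟩ := nonempty_mulEquiv_multiplicative_fin ↥sᶜ
  have : Nonempty s := ⟨u, rfl⟩
  have : Nonempty ↥sᶜ := ⟨v, hsc ▸ rfl⟩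
  exact ⟨⟨_, _, Nat.card_pos, Nat.card_pos, ⟨e.trans (MulEquiv.coprodCongr es esc)⟩⟩,
    card_connectedComponent_eq_two huv hcover,
    fun a b h => hadj (ConnectedComponent.exact h)⟩
end

section
/- Let Γ be a finite simplicial graph such that Γ \ st(v) is connected (and possibly empty) for every vertex v. Then Γ has no SILs, i.e., for every pair of non-adjacent vertices u, v, every connected component of Γ \ (lk(u) ∩ lk(v)) contains u or v. -/
/-- The vertex set of `Γ \ st v`. -/
def StarComplement {V : Type} (G : SimpleGraph V) (v : V) : Set V :=
  {x : V | x ≠ v ∧ ¬ G.Adj v x}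

/-!
Every vertex `x` of `Γ \ (lk u ∩ lk v)` misses the link of `u` or of `v`, say of `u`. Then
either `x = u`, or `x` and `v` both lie in `Γ \ st u`, which is connected and contained in
`Γ \ (lk u ∩ lk v)`; so `x` lies in the component of `v`.
-/

open SimpleGraph

section

variable {V : Type} (G : SimpleGraph V)

lemma starComplement_subset_silSet_left (u v : V) : StarComplement G u ⊆ SILSet G u v :=
  fun _ hx hadj => hx.2 hadj.1.symm

lemma starComplement_subset_silSet_right (u v : V) : StarComplement G v ⊆ SILSet G u v :=
  fun _ hx hadj => hx.2 hadj.2.symm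

variable {G}

lemma eq_or_mem_starComplement_of_not_adj {x a : V} (h : ¬ G.Adj x a) :
    x = a ∨ x ∈ StarComplement G a :=
  or_iff_not_imp_left.mpr fun hxa => ⟨hxa, fun hax => h hax.symm⟩

lemma mem_starComplement_of_not_adj {a b : V} (hab : a ≠ b) (h : ¬ G.Adj a b) :
    b ∈ StarComplement G a :=
  ⟨hab.symm, h⟩

lemma induce_reachable_of_preconnected_of_subset {s t : Set V}
    (hs : (G.induce s).Preconnected) (hst : s ⊆ t) {x y : V} (hx : x ∈ s) (hy : y ∈ s) :
    (G.induce t).Reachable ⟨x, hst hx⟩ ⟨y, hst hy⟩ :=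
  (hs ⟨x, hx⟩ ⟨y, hy⟩).map (G.induceHomOfLE hst).toHom

end

theorem no_sil_of_star_complements_connected_general {V : Type}
    (G : SimpleGraph V)
    (hconn : ∀ v : V, (G.induce (StarComplement G v)).Preconnected) :
    ∀ u v : V, u ≠ v → ¬ G.Adj u v →
      ∀ w : SILSet G u v,
        (G.induce (SILSet G u v)).connectedComponentMk w =
          (G.induce (SILSet G u v)).connectedComponentMk
            ⟨u, fun h => G.loopless.irrefl u h.1⟩ ∨
        (G.induce (SILSet G u v)).connectedComponentMk w =
          (G.induce (SILSet G u v)).connectedComponentMk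
            ⟨v, fun h => G.loopless.irrefl v h.2⟩ := by
  rintro u v huv hadj ⟨x, hx⟩
  rcases not_and_or.mp hx with hxu | hxv
  · rcases eq_or_mem_starComplement_of_not_adj hxu with rfl | hx'
    · exact Or.inl rfl
    · exact Or.inr <| ConnectedComponent.sound <|
        induce_reachable_of_preconnected_of_subset (hconn u)
          (starComplement_subset_silSet_left G u v) hx'
          (mem_starComplement_of_not_adj huv hadj)
  · rcases eq_or_mem_starComplement_of_not_adj hxv with rfl | hx'
    · exact Or.inr rfl
    · exact Or.inl <| ConnectedComponent.sound <|
        induce_reachable_of_preconnected_of_subset (hconn v)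
          (starComplement_subset_silSet_right G u v) hx'
          (mem_starComplement_of_not_adj huv.symm fun h => hadj h.symm)

theorem no_sil_of_star_complements_connected {V : Type} [Fintype V]
    (G : SimpleGraph V)
    (hconn : ∀ v : V, (G.induce (StarComplement G v)).Preconnected) :
    ∀ u v : V, u ≠ v → ¬ G.Adj u v →
      ∀ w : SILSet G u v,
        (G.induce (SILSet G u v)).connectedComponentMk w =
          (G.induce (SILSet G u v)).connectedComponentMk
            ⟨u, fun h => G.loopless.irrefl u h.1⟩ ∨
        (G.induce (SILSet G u v)).connectedComponentMk w =
          (G.induce (SILSet G u v)).connectedComponentMk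
            ⟨v, fun h => G.loopless.irrefl v h.2⟩ :=
  no_sil_of_star_complements_connected_general G hconn
end

section
/- Let G₁ and G₂ be finitely generated groups, each admitting a surjective homomorphism onto ℤ (i.e., indicable). Then G₁ × G₂ is algebraically fibred: there is a surjection G₁ × G₂ → ℤ with finitely generated kernel. -/
open Multiplicative Subgroup

section Untwist

variable {G : Type*} [Group G] (f : G →* Multiplicative ℤ) (x : G)

theorem map_mul_zpow_neg_eq_one (hx : f x = ofAdd 1) (g : G) :
    f (g * x ^ (-toAdd (f g))) = 1 := by
  rw [map_mul, map_zpow, hx, ← ofAdd_zsmul, smul_eq_mul, mul_one, ofAdd_neg, ofAdd_toAdd,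
    mul_inv_cancel]

/-- The cocycle identity `φ (a * b) = φ a * x ^ (f a) * φ b * x ^ (-f a)` for
`φ g = g * x ^ (-f g)` lets membership of `φ` in an `x`-invariant subgroup pass from
generators to the whole group. -/
theorem mul_zpow_neg_mem_of_closure_eq_top {T : Set G} (hT : closure T = ⊤) {L : Subgroup G}
    (hx : x ∈ normalizer (L : Set G)) (hTL : ∀ g ∈ T, g * x ^ (-toAdd (f g)) ∈ L) (g : G) :
    g * x ^ (-toAdd (f g)) ∈ L := by
  have conj_mem (n : ℤ) {a : G} (ha : a ∈ L) : x ^ n * a * (x ^ n)⁻¹ ∈ L :=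
    (mem_normalizer_iff.mp (zpow_mem hx n) a).mp ha
  induction (hT ▸ mem_top g : g ∈ closure T) using closure_induction with
  | mem g hg => exact hTL g hg
  | one => simp
  | mul a b _ _ ha hb =>
    convert L.mul_mem ha (conj_mem (toAdd (f a)) hb) using 1
    simp only [map_mul, toAdd_mul, neg_add, zpow_add, zpow_neg]
    group
  | inv a _ ha =>
    convert conj_mem (-toAdd (f a)) (L.inv_mem ha) using 1
    simp only [map_inv, toAdd_inv, neg_neg, zpow_neg]
    group

end Untwist

section Prod

variable {G₁ G₂ : Type*} [Group G₁] [Group G₂]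

theorem fst_mem_normalizer_comap_inl {H : Subgroup (G₁ × G₂)} {t : G₁ × G₂} (ht : t ∈ H) :
    t.1 ∈ normalizer (H.comap (MonoidHom.inl G₁ G₂) : Set G₁) := by
  refine mem_normalizer_iff.mpr fun a => ?_
  have : MonoidHom.inl G₁ G₂ (t.1 * a * t.1⁻¹) = t * MonoidHom.inl G₁ G₂ a * t⁻¹ := by
    ext <;> simp
  rw [mem_comap, mem_comap, this]
  exact mem_normalizer_iff.mp (le_normalizer ht) _

theorem snd_mem_normalizer_comap_inr {H : Subgroup (G₁ × G₂)} {t : G₁ × G₂} (ht : t ∈ H) :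
    t.2 ∈ normalizer (H.comap (MonoidHom.inr G₁ G₂) : Set G₂) := by
  refine mem_normalizer_iff.mpr fun b => ?_
  have : MonoidHom.inr G₁ G₂ (t.2 * b * t.2⁻¹) = t * MonoidHom.inr G₁ G₂ b * t⁻¹ := by
    ext <;> simp
  rw [mem_comap, mem_comap, this]
  exact mem_normalizer_iff.mp (le_normalizer ht) _

/-- An element `(a, b)` of the kernel, with `n = f₁ a = -f₂ b`, factors as
`(a * x ^ (-n), 1) * (1, b * y ^ n) * (x, y⁻¹) ^ n`. -/
theorem ker_coprod_le {f₁ : G₁ →* Multiplicative ℤ} {f₂ : G₂ →* Multiplicative ℤ} {x : G₁}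
    {y : G₂} {H : Subgroup (G₁ × G₂)} (ht : (x, y⁻¹) ∈ H)
    (h₁ : ∀ a, (a * x ^ (-toAdd (f₁ a)), 1) ∈ H) (h₂ : ∀ b, (1, b * y ^ (-toAdd (f₂ b))) ∈ H) :
    (f₁.coprod f₂).ker ≤ H := by
  rintro ⟨a, b⟩ hab
  have hn : toAdd (f₂ b) = -toAdd (f₁ a) := by
    rw [MonoidHom.mem_ker, MonoidHom.coprod_apply] at hab
    simpa [eq_neg_iff_add_eq_zero, add_comm] using congrArg toAdd hab
  have : ((a, b) : G₁ × G₂) =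
      (a * x ^ (-toAdd (f₁ a)), 1) * (1, b * y ^ (-toAdd (f₂ b))) * (x, y⁻¹) ^ toAdd (f₁ a) := by
    ext <;> simp [hn, zpow_neg]
  rw [this]
  exact H.mul_mem (H.mul_mem (h₁ a) (h₂ b)) (H.zpow_mem ht _)

end Prod

theorem algFibered_prod_of_indicable (G₁ G₂ : Type*) [Group G₁] [Group G₂]
    [Group.FG G₁] [Group.FG G₂]
    (f₁ : G₁ →* Multiplicative ℤ) (hf₁ : Function.Surjective f₁)
    (f₂ : G₂ →* Multiplicative ℤ) (hf₂ : Function.Surjective f₂) :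
    AlgFibered (G₁ × G₂) := by
  obtain ⟨x, hx⟩ := hf₁ (ofAdd 1)
  obtain ⟨y, hy⟩ := hf₂ (ofAdd 1)
  obtain ⟨T₁, hT₁, hT₁fin⟩ := Group.fg_iff.mp ‹Group.FG G₁›
  obtain ⟨T₂, hT₂, hT₂fin⟩ := Group.fg_iff.mp ‹Group.FG G₂›
  set S : Set (G₁ × G₂) := insert (x, y⁻¹)
    ((fun a => (a * x ^ (-toAdd (f₁ a)), 1)) '' T₁ ∪ (fun b => (1, b * y ^ (-toAdd (f₂ b)))) '' T₂)
  have ht : (x, y⁻¹) ∈ closure S := subset_closure (Set.mem_insert _ _)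
  have hker : (f₁.coprod f₂).ker = closure S := by
    refine le_antisymm (ker_coprod_le ht ?_ ?_) ?_
    · refine mul_zpow_neg_mem_of_closure_eq_top f₁ x hT₁ (fst_mem_normalizer_comap_inl ht)
        fun a ha => ?_
      exact subset_closure (Or.inr (Or.inl ⟨a, ha, rfl⟩))
    · refine mul_zpow_neg_mem_of_closure_eq_top f₂ y hT₂
        (inv_mem_iff.mp (snd_mem_normalizer_comap_inr ht)) fun b hb => ?_
      exact subset_closure (Or.inr (Or.inr ⟨b, hb, rfl⟩))
    · rw [closure_le]
      rintro _ (rfl | ⟨a, -, rfl⟩ | ⟨b, -, rfl⟩)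
      · simp [hx, hy]
      · simpa using map_mul_zpow_neg_eq_one f₁ x hx a
      · simpa using map_mul_zpow_neg_eq_one f₂ y hy b
  refine ⟨f₁.coprod f₂, fun z => ?_, ?_⟩
  · obtain ⟨a, rfl⟩ := hf₁ z
    exact ⟨(a, 1), by simp⟩
  · exact (fg_iff _).mpr ⟨S, hker.symm, (hT₁fin.image _ |>.union (hT₂fin.image _)).insert _⟩
end

section
/- Let F₂ be the free group on two generators and n ≥ 2. Then the homomorphism φ : F₂ⁿ → ℤ sending every standard free generator of every factor to 1 is surjective with finitely generated kernel. -/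
/-!
Let `E` be the set of standard generators of `G = (F₂)ⁿ` and `H` the subgroup generated by
the quotients `E / E`; clearly `H ≤ ker φ`, and `H` together with a single generator `t`
generates `G`. The point is that `t` normalises `H`. Conjugating a generator by `t` changes it
only in the coordinate `i` of `t`. Writing `wᵢ` for `w ∈ F₂` placed in coordinate `i`, for
`j ≠ i` and a generator `a` the map `w ↦ wᵢ · aⱼ ^ (-φ wᵢ)` is a homomorphism `F₂ → G`
(coordinates `i` and `j` commute) sending the generators of `F₂` into `H`, so its image lies in
`H`; this covers the conjugates `(t x t⁻¹) · aⱼ⁻¹` of the generators `x` in coordinate `i`.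
Hence `G = H · ⟨t⟩`, and since `φ` is injective on `⟨t⟩`, `ker φ = H`.
-/

open Subgroup Pointwise

section General

variable {G : Type*} [Group G]

theorem Subgroup.mem_normalizer_of_map_conj_le {H : Subgroup G} {g : G}
    (h₁ : H.map (MulAut.conj g) ≤ H) (h₂ : H.map (MulAut.conj g⁻¹) ≤ H) :
    g ∈ normalizer (H : Set G) := by
  refine mem_normalizer_iff.mpr fun h => ⟨fun hh => h₁ ⟨h, hh, rfl⟩, fun hh => ?_⟩
  simpa [mul_assoc] using h₂ ⟨_, hh, rfl⟩

theorem MonoidHom.ker_eq_of_sup_zpowers_eq_top {φ : G →* Multiplicative ℤ} {H : Subgroup G}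
    {t : G} (hH : H ≤ φ.ker) (ht : t ∈ normalizer (H : Set G)) (hφt : φ t = .ofAdd 1)
    (htop : H ⊔ zpowers t = ⊤) : φ.ker = H := by
  refine le_antisymm (fun g hg => ?_) hH
  have hg' : g ∈ ((H ⊔ zpowers t : Subgroup G) : Set G) := htop ▸ mem_top g
  rw [coe_mul_of_right_le_normalizer_left _ _ (zpowers_le.mpr ht)] at hg'
  obtain ⟨h, hh, _, ⟨k, rfl⟩, rfl⟩ := hg'
  have hk : k = 0 := by
    rw [MonoidHom.mem_ker, map_mul, hH hh, map_zpow, hφt, one_mul, ← ofAdd_zsmul] at hg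
    simpa using hg
  simpa [hk] using hh

namespace Subgroup

variable {E : Set G}

theorem closure_div_le_ker {M : Type*} [Group M] {φ : G →* M} {c : M}
    (hφ : ∀ x ∈ E, φ x = c) : closure (E / E) ≤ φ.ker := by
  rw [closure_le]
  rintro _ ⟨x, hx, y, hy, rfl⟩
  simp [MonoidHom.mem_ker, hφ x hx, hφ y hy]

theorem closure_div_sup_zpowers_eq_top (hE : closure E = ⊤) {t : G} (ht : t ∈ E) :
    closure (E / E) ⊔ zpowers t = ⊤ := by
  rw [eq_top_iff, ← hE, closure_le]
  intro x hx
  simpa using mul_mem (mem_sup_left (subset_closure (Set.div_mem_div hx ht)))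
    (mem_sup_right (mem_zpowers t))

theorem map_closure_div_le (σ : G →* G) (c : G) (hσ : ∀ x ∈ E, σ x / c ∈ closure (E / E)) :
    (closure (E / E)).map σ ≤ closure (E / E) := by
  rw [MonoidHom.map_closure, closure_le]
  rintro _ ⟨_, ⟨x, hx, y, hy, rfl⟩, rfl⟩
  rw [map_div, ← div_div_div_cancel_right (σ x) (σ y) c]
  exact div_mem (hσ x hx) (hσ y hy)

end Subgroup

end General

section Pi

variable {ι A : Type*} [Group A] [DecidableEq ι]

variable (ι) in
def mulSingles (S : Set A) : Set (ι → A) := ⋃ i, Pi.mulSingle i '' S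

variable {S : Set A}

theorem mem_mulSingles {y : ι → A} :
    y ∈ mulSingles ι S ↔ ∃ i, ∃ x ∈ S, Pi.mulSingle i x = y := by
  simp [mulSingles]

theorem mulSingle_mem_mulSingles (i : ι) {x : A} (hx : x ∈ S) :
    Pi.mulSingle i x ∈ mulSingles ι S :=
  mem_mulSingles.mpr ⟨i, x, hx, rfl⟩

theorem finite_mulSingles [Finite ι] (hS : S.Finite) : (mulSingles ι S).Finite :=
  Set.finite_iUnion fun _ => hS.image _

theorem closure_mulSingles [Finite ι] (hS : closure S = ⊤) : closure (mulSingles ι S) = ⊤ := by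
  refine eq_top_iff.mpr fun g _ => pi_mem_of_mulSingle_mem g fun i => ?_
  have hmap : (closure S).map (MonoidHom.mulSingle (fun _ => A) i) ≤
      closure (mulSingles ι S) := by
    rw [MonoidHom.map_closure]
    exact closure_mono (Set.image_subset_iff.mpr fun x hx => mulSingle_mem_mulSingles i hx)
  exact hmap ⟨g i, hS ▸ mem_top _, rfl⟩

theorem mulSingle_mul_zpow_mem_closure_div (hS : closure S = ⊤) {i j : ι} (hij : i ≠ j)
    {x₀ : A} (hx₀ : x₀ ∈ S) (φ : (ι → A) →* Multiplicative ℤ)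
    (hφ : ∀ x ∈ S, φ (Pi.mulSingle i x) = .ofAdd 1) (a : A) :
    Pi.mulSingle i a * Pi.mulSingle j x₀ ^ (-(φ (Pi.mulSingle i a)).toAdd) ∈
      closure (mulSingles ι S / mulSingles ι S) := by
  set ε := MonoidHom.mulSingle (fun _ : ι => A) i
  set c := Pi.mulSingle (M := fun _ => A) j x₀
  have hcomm : ∀ (b : A) (k : Multiplicative ℤ), Commute (ε b) (zpowersHom _ c⁻¹ k) :=
    fun b k => (Commute.inv_right (Pi.mulSingle_commute (f := fun _ => A) hij b x₀)).zpow_right _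
  let θ : A →* (ι → A) :=
    (ε.noncommCoprod (zpowersHom _ c⁻¹) hcomm).comp ((MonoidHom.id A).prod (φ.comp ε))
  have hθ : θ.range ≤ closure (mulSingles ι S / mulSingles ι S) := by
    rw [MonoidHom.range_eq_map, ← hS, MonoidHom.map_closure, closure_le]
    rintro _ ⟨x, hx, rfl⟩
    simpa [θ, ε, hφ x hx, div_eq_mul_inv] using subset_closure
      (Set.div_mem_div (mulSingle_mem_mulSingles i hx) (mulSingle_mem_mulSingles j hx₀))
  simpa [θ, ε, zpow_neg, inv_zpow] using hθ ⟨a, rfl⟩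

theorem map_conj_mulSingle_le_closure_div [Nontrivial ι] (hS : closure S = ⊤) {x₀ : A}
    (hx₀ : x₀ ∈ S) (φ : (ι → A) →* Multiplicative ℤ)
    (hφ : ∀ i, ∀ x ∈ S, φ (Pi.mulSingle i x) = .ofAdd 1) (i : ι) (b : A) :
    (closure (mulSingles ι S / mulSingles ι S)).map (MulAut.conj (Pi.mulSingle i b : ι → A)) ≤
      closure (mulSingles ι S / mulSingles ι S) := by
  obtain ⟨j, hji⟩ := exists_ne i
  refine map_closure_div_le _ (Pi.mulSingle j x₀) fun _ hy => ?_
  obtain ⟨k, x, hx, rfl⟩ := mem_mulSingles.mp hy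
  simp only [MonoidHom.coe_coe, MulAut.conj_apply]
  by_cases hki : k = i
  · subst hki
    have hconj : Pi.mulSingle k b * Pi.mulSingle k x * (Pi.mulSingle k b)⁻¹ =
        (Pi.mulSingle k (b * x * b⁻¹) : ι → A) := by
      simp [Pi.mulSingle_mul, Pi.mulSingle_inv]
    have hφconj : φ (Pi.mulSingle k (b * x * b⁻¹)) = .ofAdd 1 := by
      simp [Pi.mulSingle_mul, Pi.mulSingle_inv, hφ k x hx]
    simpa [hconj, hφconj, div_eq_mul_inv] using
      mulSingle_mul_zpow_mem_closure_div hS (Ne.symm hji) hx₀ φ (hφ k) (b * x * b⁻¹)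
  · rw [(Pi.mulSingle_commute (f := fun _ => A) (Ne.symm hki) b x).eq, mul_inv_cancel_right]
    exact subset_closure (Set.div_mem_div (mulSingle_mem_mulSingles k hx)
      (mulSingle_mem_mulSingles j hx₀))

theorem ker_eq_closure_div_mulSingles [Finite ι] [Nontrivial ι] (hS : closure S = ⊤)
    (hS₀ : S.Nonempty) (φ : (ι → A) →* Multiplicative ℤ)
    (hφ : ∀ i, ∀ x ∈ S, φ (Pi.mulSingle i x) = .ofAdd 1) :
    φ.ker = closure (mulSingles ι S / mulSingles ι S) := by
  obtain ⟨i, -⟩ := exists_pair_ne ι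
  obtain ⟨x₀, hx₀⟩ := hS₀
  have hconj := map_conj_mulSingle_le_closure_div hS hx₀ φ hφ i
  refine φ.ker_eq_of_sup_zpowers_eq_top (t := Pi.mulSingle i x₀) ?_ ?_ (hφ i x₀ hx₀)
    (closure_div_sup_zpowers_eq_top (closure_mulSingles hS) (mulSingle_mem_mulSingles i hx₀))
  · refine closure_div_le_ker (c := .ofAdd 1) fun y hy => ?_
    obtain ⟨k, x, hx, rfl⟩ := mem_mulSingles.mp hy
    exact hφ k x hx
  · refine mem_normalizer_of_map_conj_le (hconj x₀) ?_
    rw [← Pi.mulSingle_inv]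
    exact hconj x₀⁻¹

end Pi

theorem free_group_power_fibres (n : ℕ) (hn : 2 ≤ n)
    (φ : ((Fin n) → FreeGroup (Fin 2)) →* Multiplicative ℤ)
    (hφ : ∀ (i : Fin n) (x : Fin 2),
      φ (Pi.mulSingle i (FreeGroup.of x)) = Multiplicative.ofAdd 1) :
    Function.Surjective φ ∧ (MonoidHom.ker φ).FG := by
  have : Nontrivial (Fin n) := Fin.nontrivial_iff_two_le.mpr hn
  have hφ' : ∀ i, ∀ x ∈ Set.range FreeGroup.of, φ (Pi.mulSingle i x) = .ofAdd 1 := by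
    rintro i _ ⟨x, rfl⟩
    exact hφ i x
  refine ⟨fun z => ⟨Pi.mulSingle (⟨0, by omega⟩ : Fin n) (FreeGroup.of 0) ^ z.toAdd, ?_⟩, ?_⟩
  · simp [hφ, ← ofAdd_zsmul]
  · rw [ker_eq_closure_div_mulSingles (FreeGroup.closure_range_of _) (Set.range_nonempty _) φ hφ']
    have hfin := finite_mulSingles (ι := Fin n) (Set.finite_range (FreeGroup.of (α := Fin 2)))
    exact (fg_iff _).mpr ⟨_, rfl, hfin.div hfin⟩
end
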